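/- Let A ∈ ℝ^{n×n}, B ∈ ℝ^{n×m} and λ ∈ ℂ. Then there exists a nonzero vector ξ ∈ ℂⁿ with ξᵀA = λξᵀ and ξᵀB = 0 if and only if λ is an eigenvalue of A + BK for every K ∈ ℝ^{m×n}. -/

import Mathlib

/-!
(⇒) A left eigenvector `ξ` of `A` with `ξᵀB = 0` stays a left eigenvector of `A + BK`, so `λ`
is a root of its characteristic polynomial.

(⇐) If there is no such `ξ`, no nonzero functional vanishes on the columns of both `A - λ` and
`B`, so their ranges span `ℂⁿ`. Rank-one feedbacks then enlarge the range of `A - λ + BK` until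
it is everything, giving a complex `K` with `A - λ + BK` invertible. Writing `K = K₁ + i K₂`,
`t ↦ det (A - λ + B (K₁ + t K₂))` is a polynomial that does not vanish at `i`, so it does not
vanish at some real `t` either.
-/

open Matrix

def toC {a b : Type*} (M : Matrix a b ℝ) : Matrix a b ℂ := M.map Complex.ofReal

namespace LinearMap

variable {K V W : Type*} [Field K] [AddCommGroup V] [Module K V] [FiniteDimensional K V]
  [AddCommGroup W] [Module K W]

/-- The feedback is `x ↦ φ x • c` with `f v = 0`, `φ v = 1` and `g c ∉ range f`: it sends `v` to
`g c` and moves every other value of `f` only by `g c`-multiples. -/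
theorem exists_range_lt_range_add_comp (f : V →ₗ[K] V) (g : W →ₗ[K] V)
    (hfg : range f ⊔ range g = ⊤) (hf : range f ≠ ⊤) :
    ∃ k : V →ₗ[K] W, range f < range (f + g ∘ₗ k) := by
  obtain ⟨v, hv : f v = 0, hv0⟩ :=
    Submodule.ne_bot_iff _ |>.mp (mt ker_eq_bot_iff_range_eq_top.mp hf)
  obtain ⟨_, ⟨c, rfl⟩, hc⟩ : ∃ u ∈ range g, u ∉ range f := by
    refine SetLike.not_le_iff_exists.mp fun hle => hf ?_
    rwa [sup_eq_left.mpr hle] at hfg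
  obtain ⟨φ, hφ⟩ := Module.Projective.exists_dual_eq_one K hv0
  have hk : ∀ x, (f + g ∘ₗ φ.smulRight c) x = f x + φ x • g c := by simp
  have hgc : g c ∈ range (f + g ∘ₗ φ.smulRight c) :=
    mem_range.mpr ⟨v, by rw [hk, hv, hφ, one_smul, zero_add]⟩
  refine ⟨φ.smulRight c, SetLike.lt_iff_le_and_exists.mpr ⟨?_, g c, hgc, hc⟩⟩
  rintro _ ⟨x, rfl⟩
  exact mem_range.mpr ⟨x - φ x • v, by simp only [hk, map_sub, map_smul, hv, hφ]; simp⟩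

theorem exists_range_add_comp_eq_top (f : V →ₗ[K] V) (g : W →ₗ[K] V)
    (hfg : range f ⊔ range g = ⊤) :
    ∃ k : V →ₗ[K] W, range (f + g ∘ₗ k) = ⊤ := by
  obtain ⟨_, ⟨k, rfl⟩, hmax⟩ :=
    wellFounded_gt.has_min (Set.range fun k : V →ₗ[K] W => range (f + g ∘ₗ k)) ⟨_, 0, rfl⟩
  refine ⟨k, by_contra fun hne => ?_⟩
  have hsup : range (f + g ∘ₗ k) ⊔ range g = ⊤ := by
    refine eq_top_iff.mpr (hfg ▸ sup_le ?_ le_sup_right)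
    rintro _ ⟨x, rfl⟩
    have : f x = (f + g ∘ₗ k) x - g (k x) := by simp
    exact this ▸ sub_mem (Submodule.mem_sup_left ⟨x, rfl⟩) (Submodule.mem_sup_right ⟨k x, rfl⟩)
  obtain ⟨k', hk'⟩ := exists_range_lt_range_add_comp _ g hsup hne
  rw [add_assoc, ← comp_add] at hk'
  exact hmax _ ⟨k + k', rfl⟩ hk'

end LinearMap

namespace Matrix

variable {n m p K : Type*} [Fintype n] [DecidableEq n] [Fintype m] [DecidableEq m]
  [Fintype p] [DecidableEq p] [Field K]

theorem dotProductEquiv_vecMul (ξ : n → K) (M : Matrix n m K) :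
    dotProductEquiv K m (ξ ᵥ* M) = dotProductEquiv K n ξ ∘ₗ toLin' M :=
  LinearMap.ext fun x => by simp [dotProduct_mulVec]

theorem vecMul_eq_zero_iff_range_le_ker (ξ : n → K) (M : Matrix n m K) :
    ξ ᵥ* M = 0 ↔ LinearMap.range (toLin' M) ≤ LinearMap.ker (dotProductEquiv K n ξ) := by
  rw [LinearMap.range_le_ker_iff, ← dotProductEquiv_vecMul, LinearEquiv.map_eq_zero_iff]

theorem sup_range_toLin'_eq_top (M : Matrix n m K) (B : Matrix n p K)
    (h : ∀ ξ : n → K, ξ ᵥ* M = 0 → ξ ᵥ* B = 0 → ξ = 0) :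
    LinearMap.range (toLin' M) ⊔ LinearMap.range (toLin' B) = ⊤ := by
  by_contra hne
  obtain ⟨φ, hφ, hφ_map⟩ :=
    Submodule.exists_dual_map_eq_bot_of_lt_top (lt_top_iff_ne_top.mpr hne) inferInstance
  obtain ⟨ξ, rfl⟩ := (dotProductEquiv K n).surjective φ
  rw [← le_bot_iff, Submodule.map_le_iff_le_comap, Submodule.comap_bot, sup_le_iff,
    ← vecMul_eq_zero_iff_range_le_ker, ← vecMul_eq_zero_iff_range_le_ker] at hφ_map
  exact hφ (by rw [h ξ hφ_map.1 hφ_map.2, map_zero])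

theorem exists_det_add_mul_ne_zero (M : Matrix n n K) (B : Matrix n m K)
    (h : ∀ ξ : n → K, ξ ᵥ* M = 0 → ξ ᵥ* B = 0 → ξ = 0) :
    ∃ F : Matrix m n K, (M + B * F).det ≠ 0 := by
  obtain ⟨k, hk⟩ := LinearMap.exists_range_add_comp_eq_top _ _ (sup_range_toLin'_eq_top M B h)
  refine ⟨LinearMap.toMatrix' k, ?_⟩
  rw [← toLin'_toMatrix' k, ← toLin'_mul, ← map_add, LinearMap.range_eq_top] at hk
  exact ((isUnit_iff_isUnit_det _).mp (mulVec_surjective_iff_isUnit.mp hk)).ne_zero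

open Polynomial in
theorem finite_setOf_det_add_smul_eq_zero {R : Type*} [CommRing R] [IsDomain R]
    (X Y : Matrix n n R) {z : R} (hz : (X + z • Y).det ≠ 0) :
    {t : R | (X + t • Y).det = 0}.Finite := by
  set P : R[X] := (X.map C + (Polynomial.X : R[X]) • Y.map C).det
  have hP : ∀ t, P.eval t = (X + t • Y).det := fun t => by
    rw [← coe_evalRingHom, RingHom.map_det]
    congr 1
    ext i j
    simpa using mul_comm _ _
  have hP0 : P ≠ 0 := fun h0 => hz (by rw [← hP, h0, eval_zero])
  simpa only [IsRoot, hP] using finite_setOfPred_isRoot hP0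

theorem exists_mulVec_eq_smul_iff_det_sub_eq_zero (N : Matrix n n K) (μ : K) :
    (∃ v ≠ 0, N *ᵥ v = μ • v) ↔ (N - μ • 1).det = 0 := by
  simp only [← exists_mulVec_eq_zero_iff, sub_mulVec, smul_mulVec, one_mulVec, sub_eq_zero]

theorem exists_vecMul_eq_smul_iff_det_sub_eq_zero (N : Matrix n n K) (μ : K) :
    (∃ v ≠ 0, v ᵥ* N = μ • v) ↔ (N - μ • 1).det = 0 := by
  simp only [← exists_vecMul_eq_zero_iff, vecMul_sub, vecMul_smul, vecMul_one, sub_eq_zero]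

end Matrix

section Complexification

variable {n m l : Type*}

theorem toC_add (A B : Matrix n m ℝ) : toC (A + B) = toC A + toC B :=
  Matrix.map_add _ Complex.ofReal_add A B

theorem toC_mul [Fintype m] (A : Matrix n m ℝ) (B : Matrix m l ℝ) :
    toC (A * B) = toC A * toC B :=
  Matrix.map_mul (f := Complex.ofRealHom)

theorem toC_smul (t : ℝ) (A : Matrix n m ℝ) : toC (t • A) = (t : ℂ) • toC A :=
  Matrix.ext fun _ _ => Complex.ofReal_mul t _

theorem exists_real_det_add_mul_ne_zero [Fintype n] [DecidableEq n] [Fintype m]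
    (M : Matrix n n ℂ) (B : Matrix n m ℝ) (F : Matrix m n ℂ) (hF : (M + toC B * F).det ≠ 0) :
    ∃ K : Matrix m n ℝ, (M + toC B * toC K).det ≠ 0 := by
  set Kre := F.map Complex.re
  set Kim := F.map Complex.im
  have hF_eq : F = toC Kre + Complex.I • toC Kim := by
    ext i j
    simpa [toC, Kre, Kim, mul_comm] using (Complex.re_add_im (F i j)).symm
  have hsplit : ∀ z : ℂ, M + toC B * (toC Kre + z • toC Kim) =
      (M + toC B * toC Kre) + z • (toC B * toC Kim) := fun z => by
    rw [Matrix.mul_add, Matrix.mul_smul, add_assoc]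
  have hfin := Matrix.finite_setOf_det_add_smul_eq_zero _ _ (z := Complex.I)
    (by rwa [← hsplit, ← hF_eq])
  obtain ⟨_, ⟨t, rfl⟩, ht⟩ :=
    (Set.infinite_range_of_injective Complex.ofReal_injective).exists_notMem_finite hfin
  exact ⟨Kre + t • Kim, by rwa [toC_add, toC_smul, hsplit]⟩

end Complexification

/-- **PBH unremovable mode.** There is a nonzero `ξ ∈ ℂⁿ` with `ξᵀA = λξᵀ` and
`ξᵀB = 0` iff `λ` is an eigenvalue of `A + BK` for every real `K`. -/
theorem pbh_uncontrollable_mode_iff (n m : ℕ)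
    (A : Matrix (Fin n) (Fin n) ℝ) (B : Matrix (Fin n) (Fin m) ℝ) (lam : ℂ) :
    (∃ ξ : Fin n → ℂ, ξ ≠ 0 ∧
      Matrix.vecMul ξ (toC A) = lam • ξ ∧ Matrix.vecMul ξ (toC B) = 0) ↔
    (∀ K : Matrix (Fin m) (Fin n) ℝ, ∃ v : Fin n → ℂ, v ≠ 0 ∧
      Matrix.mulVec (toC (A + B * K)) v = lam • v) := by
  constructor
  · rintro ⟨ξ, hξ, hξA, hξB⟩ K
    rw [exists_mulVec_eq_smul_iff_det_sub_eq_zero, ← exists_vecMul_eq_smul_iff_det_sub_eq_zero]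
    refine ⟨ξ, hξ, ?_⟩
    rw [toC_add, toC_mul, vecMul_add, ← vecMul_vecMul, hξA, hξB, zero_vecMul, add_zero]
  · intro hK
    by_contra hno
    have hcoprime : ∀ ξ : Fin n → ℂ, ξ ᵥ* (toC A - lam • 1) = 0 → ξ ᵥ* toC B = 0 → ξ = 0 :=
      fun ξ hξA hξB => by_contra fun hξ => hno ⟨ξ, hξ,
        by rwa [vecMul_sub, vecMul_smul, vecMul_one, sub_eq_zero] at hξA, hξB⟩
    obtain ⟨F, hF⟩ := exists_det_add_mul_ne_zero _ _ hcoprime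
    obtain ⟨K, hdet⟩ := exists_real_det_add_mul_ne_zero _ B F hF
    refine hdet ?_
    rw [sub_add_eq_add_sub, ← toC_mul, ← toC_add]
    exact (exists_mulVec_eq_smul_iff_det_sub_eq_zero _ _).mp (hK K)
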